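/- arXiv:math/0407159 — 7 statements merged into one kernel-verified Lean document; each statement's English description precedes it below -/
import Mathlib

section
/- Let C be a commutative ring and λ ∈ C. The multiplication on the C-module ∏_{n∈ℕ} C·u_n of sequences u : ℕ → C determined by u_m·u_n = ∑_{k=0}^{m} binom(m+n−k, n)·binom(n, k)·λ^k·u_{m+n−k} (explicitly, (u·v)(j) = ∑_{m=0}^{j} ∑_{n=j−m}^{j} binom(j, n)·binom(n, m+n−j)·λ^{m+n−j}·u(m)·v(n)) makes ∏_{n∈ℕ} C·u_n into a commutative associative unital C-algebra, with identity element the sequence u_0 (i.e., the indicator sequence of 0). -/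
/-!
For `x ∈ ℕ` one has `binom(x,m)·binom(x,n) = ∑_j c(j,m,n)·binom(x,j)` with
`c(j,m,n) = binom(j,n)·binom(n,m+n-j)`, the number of ways to cover a `j`-set by an `m`-subset
and an `n`-subset. Expanding `binom(x,m)·binom(x,n)·binom(x,b)` in both bracketings and using
that `f ↦ (x ↦ ∑_q binom(x,q)·f q)` is injective (it is unitriangular) gives associativity of
the integer structure constants `c = umulCoeff`. The product is homogeneous: `u_m·u_n` carries
`λ^(m+n-j)` on `u_j`, so both bracketings of `u_m·u_n·u_b` carry `λ^(m+n+b-p)` on `u_p`, and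
associativity for arbitrary `λ` reduces to the integer identity.
-/

open Finset

/-- The multiplication on `∏_{n∈ℕ} C·u_n` of the weight-`λ` umbral algebra:
`(u·v)(j) = ∑_{m=0}^{j} ∑_{n=j−m}^{j} binom(j,n)·binom(n,m+n−j)·λ^{m+n−j}·u(m)·v(n)`. -/
def umul {C : Type*} [CommRing C] (lam : C) (u v : ℕ → C) : ℕ → C :=
  fun j => ∑ m ∈ Finset.range (j + 1), ∑ n ∈ Finset.Icc (j - m) j,
    (j.choose n : C) * (n.choose (m + n - j) : C) * lam ^ (m + n - j) * u m * v n

/-- The indicator sequence of `0`, i.e. `u_0`. -/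
def uone (C : Type*) [CommRing C] : ℕ → C := fun j => if j = 0 then 1 else 0

theorem sum_range_eq_of_forall_ge_eq_zero {M : Type*} [AddCommMonoid M] {f : ℕ → M} {N N' : ℕ}
    (h : ∀ k ≥ N, f k = 0) (h' : ∀ k ≥ N', f k = 0) :
    ∑ k ∈ range N, f k = ∑ k ∈ range N', f k := by
  rcases le_total N N' with hN | hN
  · exact (eventually_constant_sum h hN).symm
  · exact eventually_constant_sum h' hN

theorem eq_of_forall_sum_range_choose_smul_eq {M : Type*} [AddCancelCommMonoid M] {f g : ℕ → M}
    (h : ∀ x, ∑ q ∈ range (x + 1), x.choose q • f q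
      = ∑ q ∈ range (x + 1), x.choose q • g q) :
    f = g := by
  funext x
  induction x using Nat.strong_induction_on with
  | _ x ih =>
    have hx := h x
    rw [sum_range_succ, sum_range_succ, Nat.choose_self, one_smul, one_smul,
      sum_congr rfl fun q hq => by rw [ih q (mem_range.1 hq)]] at hx
    exact add_left_cancel hx

theorem sum_range_succ_triangle_comm {M : Type*} [AddCommMonoid M] (F : ℕ → ℕ → M)
    (hF : ∀ q a, q < a → F q a = 0) (x : ℕ) :
    ∑ q ∈ range (x + 1), ∑ a ∈ range (q + 1), F q a
      = ∑ a ∈ range (x + 1), ∑ q ∈ range (x + 1), F q a := by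
  rw [sum_comm]
  exact sum_congr rfl fun q hq =>
    (eventually_constant_sum (hF q) (by rw [mem_range] at hq; omega)).symm

theorem natCast_mul_pow_mul_natCast_mul_pow {R : Type*} [CommSemiring R] (x : R)
    {A B e₁ e₂ e : ℕ} (h : A * B ≠ 0 → e₁ + e₂ = e) :
    (A : R) * x ^ e₁ * ((B : R) * x ^ e₂) = ((A * B : ℕ) : R) * x ^ e := by
  by_cases hAB : A * B = 0
  · rcases Nat.mul_eq_zero.1 hAB with h0 | h0 <;> simp [h0]
  · rw [← h hAB, pow_add]; push_cast; ring

-- The coefficient of `u_j` in `u_m·u_n` at `λ = 1`; the guard is needed because `m + n - j`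
-- truncates.
def umulCoeff (j m n : ℕ) : ℕ := if j ≤ m + n then j.choose n * n.choose (m + n - j) else 0

theorem umulCoeff_eq_zero_of_add_lt {j m n : ℕ} (h : m + n < j) : umulCoeff j m n = 0 :=
  if_neg (by omega)

theorem le_add_of_umulCoeff_ne_zero {j m n : ℕ} (h : umulCoeff j m n ≠ 0) : j ≤ m + n := by
  by_contra hj
  exact h (umulCoeff_eq_zero_of_add_lt (not_le.1 hj))

theorem umulCoeff_eq_zero_of_lt_right {j m n : ℕ} (h : j < n) : umulCoeff j m n = 0 := by
  unfold umulCoeff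
  split_ifs <;> simp [Nat.choose_eq_zero_of_lt h]

theorem umulCoeff_eq_zero_of_lt_left {j m n : ℕ} (h : j < m) : umulCoeff j m n = 0 := by
  unfold umulCoeff
  split_ifs <;> simp [Nat.choose_eq_zero_of_lt (show n < m + n - j by omega)]

theorem umulCoeff_comm (j m n : ℕ) : umulCoeff j m n = umulCoeff j n m := by
  rcases lt_or_ge j m with hm | hm
  · rw [umulCoeff_eq_zero_of_lt_left hm, umulCoeff_eq_zero_of_lt_right hm]
  rcases lt_or_ge j n with hn | hn
  · rw [umulCoeff_eq_zero_of_lt_right hn, umulCoeff_eq_zero_of_lt_left hn]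
  -- Both products are the multinomial coefficient `j! / ((j-m)! (j-n)! (m+n-j)!)`.
  unfold umulCoeff
  rw [add_comm n m]
  split_ifs with hj
  · rw [Nat.choose_mul (by omega), Nat.choose_mul (by omega),
      show n - (m + n - j) = j - (m + n - j) - (m - (m + n - j)) by omega,
      Nat.choose_symm (by omega)]
  · rfl

theorem umulCoeff_zero_left (j n : ℕ) : umulCoeff j 0 n = if j = n then 1 else 0 := by
  split_ifs with h
  · simp [umulCoeff, h]
  rcases lt_or_gt_of_ne h with h | h
  · exact umulCoeff_eq_zero_of_lt_right h
  · exact umulCoeff_eq_zero_of_add_lt (by omega)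

theorem choose_mul_choose_eq_sum_umulCoeff (x m n : ℕ) :
    x.choose m * x.choose n = ∑ j ∈ range (x + 1), umulCoeff j m n * x.choose j := by
  rcases lt_or_ge x n with hxn | hnx
  · rw [Nat.choose_eq_zero_of_lt hxn, mul_zero, eq_comm]
    exact sum_eq_zero fun j hj => by
      rw [umulCoeff_eq_zero_of_lt_right (by rw [mem_range] at hj; omega), zero_mul]
  have vandermonde : x.choose m = ∑ i ∈ range (m + 1), (x - n).choose i * n.choose (m - i) := by
    conv_lhs => rw [← Nat.sub_add_cancel hnx]
    rw [Nat.add_choose_eq, Nat.sum_antidiagonal_eq_sum_range_succ_mk]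
  have summand (i : ℕ) (hi : i ∈ range (m + 1)) :
      (x - n).choose i * n.choose (m - i) * x.choose n
        = umulCoeff (n + i) m n * x.choose (n + i) := by
    have h := Nat.choose_mul (n := x) (k := n + i) (le_add_right le_rfl)
    rw [Nat.add_sub_cancel_left] at h
    rw [umulCoeff, if_pos (by rw [mem_range] at hi; omega), show m + n - (n + i) = m - i by omega]
    calc (x - n).choose i * n.choose (m - i) * x.choose n
        = n.choose (m - i) * (x.choose n * (x - n).choose i) := by ring
      _ = n.choose (m - i) * (x.choose (n + i) * (n + i).choose n) := by rw [h]
      _ = _ := by ring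
  calc x.choose m * x.choose n
      = ∑ i ∈ range (m + 1), umulCoeff (n + i) m n * x.choose (n + i) := by
        rw [vandermonde, sum_mul]
        exact sum_congr rfl summand
    _ = ∑ j ∈ range (n + (m + 1)), umulCoeff j m n * x.choose j := by
        rw [sum_range_add _ n (m + 1), sum_eq_zero (s := range n) fun j hj => by
          rw [umulCoeff_eq_zero_of_lt_right (mem_range.1 hj), zero_mul], zero_add]
    _ = ∑ j ∈ range (x + 1), umulCoeff j m n * x.choose j :=
        sum_range_eq_of_forall_ge_eq_zero
          (fun j hj => by rw [umulCoeff_eq_zero_of_add_lt (by omega), zero_mul])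
          (fun j hj => by rw [Nat.choose_eq_zero_of_lt (by omega), mul_zero])

theorem umulCoeff_assoc (p m n b : ℕ) :
    ∑ a ∈ range (p + 1), umulCoeff p a b * umulCoeff a m n
      = ∑ c ∈ range (p + 1), umulCoeff p m c * umulCoeff c n b := by
  have left (x : ℕ) : ∑ q ∈ range (x + 1),
      x.choose q • ∑ a ∈ range (q + 1), umulCoeff q a b * umulCoeff a m n
        = x.choose m * x.choose n * x.choose b := by
    simp only [smul_eq_mul, mul_sum]
    rw [sum_range_succ_triangle_comm _
      (fun q a h => by rw [umulCoeff_eq_zero_of_lt_left h, zero_mul, mul_zero]),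
      choose_mul_choose_eq_sum_umulCoeff x m n, sum_mul]
    refine sum_congr rfl fun a _ => ?_
    rw [mul_assoc, choose_mul_choose_eq_sum_umulCoeff, mul_sum]
    exact sum_congr rfl fun q _ => by ring
  have right (x : ℕ) : ∑ q ∈ range (x + 1),
      x.choose q • ∑ c ∈ range (q + 1), umulCoeff q m c * umulCoeff c n b
        = x.choose m * (x.choose n * x.choose b) := by
    simp only [smul_eq_mul, mul_sum]
    rw [sum_range_succ_triangle_comm _
      (fun q c h => by rw [umulCoeff_eq_zero_of_lt_right h, zero_mul, mul_zero]),
      choose_mul_choose_eq_sum_umulCoeff x n b, mul_sum]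
    refine sum_congr rfl fun c _ => ?_
    rw [mul_left_comm, choose_mul_choose_eq_sum_umulCoeff, mul_sum]
    exact sum_congr rfl fun q _ => by ring
  suffices (fun q ↦ ∑ a ∈ range (q + 1), umulCoeff q a b * umulCoeff a m n)
      = fun q ↦ ∑ c ∈ range (q + 1), umulCoeff q m c * umulCoeff c n b from congrFun this p
  exact eq_of_forall_sum_range_choose_smul_eq fun x => by rw [left, right, mul_assoc]

section
variable {C : Type*} [CommRing C]

theorem umul_apply_eq_sum_range (lam : C) (u v : ℕ → C) {j N : ℕ} (hN : j < N) :
    umul lam u v j = ∑ m ∈ range N, ∑ n ∈ range N,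
      (umulCoeff j m n : C) * lam ^ (m + n - j) * u m * v n := by
  rw [eventually_constant_sum (N := j + 1) (fun m hm => sum_eq_zero fun n _ => by
    rw [umulCoeff_eq_zero_of_lt_left hm, Nat.cast_zero, zero_mul, zero_mul, zero_mul]) hN]
  refine sum_congr rfl fun m _ => ?_
  rw [eventually_constant_sum (N := j + 1) (fun n hn => by
    rw [umulCoeff_eq_zero_of_lt_right hn, Nat.cast_zero, zero_mul, zero_mul, zero_mul]) hN]
  have hIcc : Icc (j - m) j = (range (j + 1)).filter (fun n => j ≤ m + n) := by
    ext n; simp only [mem_Icc, mem_filter, mem_range]; omega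
  rw [hIcc, sum_filter]
  refine sum_congr rfl fun n _ => ?_
  unfold umulCoeff
  split_ifs <;> push_cast <;> ring

theorem umul_comm (lam : C) (u v : ℕ → C) : umul lam u v = umul lam v u := by
  funext j
  rw [umul_apply_eq_sum_range lam u v (lt_add_one j),
    umul_apply_eq_sum_range lam v u (lt_add_one j), sum_comm]
  exact sum_congr rfl fun n _ => sum_congr rfl fun m _ => by
    rw [umulCoeff_comm, add_comm n m]; ring

theorem uone_umul (lam : C) (u : ℕ → C) : umul lam (uone C) u = u := by
  funext j
  simp [umul_apply_eq_sum_range lam _ u (lt_add_one j), uone, umulCoeff_zero_left]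

theorem umul_uone (lam : C) (u : ℕ → C) : umul lam u (uone C) = u := by
  rw [umul_comm, uone_umul]

theorem umul_add_left (lam : C) (u v w : ℕ → C) :
    umul lam (u + v) w = umul lam u w + umul lam v w := by
  funext j
  simp only [umul, Pi.add_apply, mul_add, add_mul, sum_add_distrib]

theorem umul_add_right (lam : C) (u v w : ℕ → C) :
    umul lam u (v + w) = umul lam u v + umul lam u w := by
  rw [umul_comm, umul_add_left, umul_comm lam v, umul_comm lam w]

theorem umul_smul_left (lam c : C) (u v : ℕ → C) :
    umul lam (c • u) v = c • umul lam u v := by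
  funext j
  simp only [umul, Pi.smul_apply, smul_eq_mul, mul_sum]
  exact sum_congr rfl fun m _ => sum_congr rfl fun n _ => by ring

theorem umul_smul_right (lam c : C) (u v : ℕ → C) :
    umul lam u (c • v) = c • umul lam u v := by
  rw [umul_comm, umul_smul_left, umul_comm]

theorem umul_umul_left_apply (lam : C) (u v w : ℕ → C) (p : ℕ) :
    umul lam (umul lam u v) w p
      = ∑ m ∈ range (p + 1), ∑ n ∈ range (p + 1), ∑ b ∈ range (p + 1),
        ((∑ a ∈ range (p + 1), umulCoeff p a b * umulCoeff a m n : ℕ) : C) *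
        lam ^ (m + n + b - p) * u m * v n * w b := by
  set s := range (p + 1)
  calc umul lam (umul lam u v) w p
      = ∑ a ∈ s, ∑ b ∈ s, ∑ m ∈ s, ∑ n ∈ s,
          ((umulCoeff p a b * umulCoeff a m n : ℕ) : C) * lam ^ (m + n + b - p) *
            u m * v n * w b := by
        rw [umul_apply_eq_sum_range _ _ _ (lt_add_one p)]
        refine sum_congr rfl fun a ha => sum_congr rfl fun b _ => ?_
        rw [umul_apply_eq_sum_range _ _ _ (mem_range.1 ha), mul_sum, sum_mul]
        refine sum_congr rfl fun m _ => ?_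
        rw [mul_sum, sum_mul]
        refine sum_congr rfl fun n _ => ?_
        rw [← natCast_mul_pow_mul_natCast_mul_pow lam (e₁ := a + b - p) (e₂ := m + n - a)
          fun h => ?_]
        · ring
        have := le_add_of_umulCoeff_ne_zero (left_ne_zero_of_mul h)
        have := le_add_of_umulCoeff_ne_zero (right_ne_zero_of_mul h)
        omega
    _ = ∑ m ∈ s, ∑ n ∈ s, ∑ b ∈ s, ∑ a ∈ s,
          ((umulCoeff p a b * umulCoeff a m n : ℕ) : C) * lam ^ (m + n + b - p) *
            u m * v n * w b := by
        rw [← sum_comm_cycle]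
        exact (sum_congr rfl fun _ _ => sum_congr rfl fun _ _ => sum_comm).trans
          sum_comm_cycle.symm
    _ = _ := by simp only [Nat.cast_sum, sum_mul]

theorem umul_umul_right_apply (lam : C) (u v w : ℕ → C) (p : ℕ) :
    umul lam u (umul lam v w) p
      = ∑ m ∈ range (p + 1), ∑ n ∈ range (p + 1), ∑ b ∈ range (p + 1),
        ((∑ c ∈ range (p + 1), umulCoeff p m c * umulCoeff c n b : ℕ) : C) *
        lam ^ (m + n + b - p) * u m * v n * w b := by
  set s := range (p + 1)
  calc umul lam u (umul lam v w) p
      = ∑ m ∈ s, ∑ c ∈ s, ∑ n ∈ s, ∑ b ∈ s,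
          ((umulCoeff p m c * umulCoeff c n b : ℕ) : C) * lam ^ (m + n + b - p) *
            u m * v n * w b := by
        rw [umul_apply_eq_sum_range _ _ _ (lt_add_one p)]
        refine sum_congr rfl fun m _ => sum_congr rfl fun c hc => ?_
        rw [umul_apply_eq_sum_range _ _ _ (mem_range.1 hc), mul_sum]
        refine sum_congr rfl fun n _ => ?_
        rw [mul_sum]
        refine sum_congr rfl fun b _ => ?_
        rw [← natCast_mul_pow_mul_natCast_mul_pow lam (e₁ := m + c - p) (e₂ := n + b - c)
          fun h => ?_]
        · ring
        have := le_add_of_umulCoeff_ne_zero (left_ne_zero_of_mul h)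
        have := le_add_of_umulCoeff_ne_zero (right_ne_zero_of_mul h)
        omega
    _ = ∑ m ∈ s, ∑ n ∈ s, ∑ b ∈ s, ∑ c ∈ s,
          ((umulCoeff p m c * umulCoeff c n b : ℕ) : C) * lam ^ (m + n + b - p) *
            u m * v n * w b :=
        sum_congr rfl fun _ _ => sum_comm_cycle.symm
    _ = _ := by simp only [Nat.cast_sum, sum_mul]

theorem umul_assoc (lam : C) (u v w : ℕ → C) :
    umul lam (umul lam u v) w = umul lam u (umul lam v w) := by
  funext p
  simp only [umul_umul_left_apply, umul_umul_right_apply, umulCoeff_assoc]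

end

theorem umul_comm_ring_structure {C : Type*} [CommRing C] (lam : C) :
    (∀ u v : ℕ → C, umul lam u v = umul lam v u) ∧
    (∀ u v w : ℕ → C, umul lam (umul lam u v) w = umul lam u (umul lam v w)) ∧
    (∀ u : ℕ → C, umul lam (uone C) u = u) ∧
    (∀ u : ℕ → C, umul lam u (uone C) = u) ∧
    (∀ u v w : ℕ → C, umul lam (u + v) w = umul lam u w + umul lam v w) ∧
    (∀ u v w : ℕ → C, umul lam u (v + w) = umul lam u v + umul lam u w) ∧
    (∀ (c : C) (u v : ℕ → C), umul lam (c • u) v = c • umul lam u v) ∧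
    (∀ (c : C) (u v : ℕ → C), umul lam u (c • v) = c • umul lam u v) :=
  ⟨umul_comm lam, umul_assoc lam, uone_umul lam, umul_uone lam, umul_add_left lam,
    umul_add_right lam, umul_smul_left lam, umul_smul_right lam⟩
end

section
/- The umbral algebra 𝓕 (the case λ = 0) is a Baxter algebra of weight zero: on the C-module ∏_{n∈ℕ} C·t_n with the multiplication determined by t_m·t_n = binom(m+n, m)·t_{m+n}, the shift operator P defined by P(t_n) = t_{n+1} (i.e., (P u)(0) = 0 and (P u)(n+1) = u(n)) satisfies P(u)·P(v) = P(u·P(v)) + P(v·P(u)) for all u, v. -/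
open Finset

/-- The multiplication of the umbral algebra `𝓕` (weight `0`) on sequences `ℕ → C`:
`(u·v)(j) = ∑_{m=0}^{j} binom(j,m)·u(m)·v(j−m)`, determined by
`t_m·t_n = binom(m+n,m)·t_{m+n}`. -/
def fmul {C : Type*} [CommRing C] (u v : ℕ → C) : ℕ → C :=
  fun j => ∑ m ∈ Finset.range (j + 1), (j.choose m : C) * u m * v (j - m)

/-- The shift operator `P(t_n) = t_{n+1}`: `(P u)(0) = 0` and `(P u)(n+1) = u(n)`. -/
def shiftP {C : Type*} [CommRing C] (u : ℕ → C) : ℕ → C :=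
  fun j => match j with
  | 0 => 0
  | n + 1 => u n

/-- The umbral algebra is a Baxter algebra of weight zero:
`P(u)·P(v) = P(u·P(v)) + P(v·P(u))`. -/
theorem shiftP_baxter_weight_zero {C : Type*} [CommRing C] (u v : ℕ → C) :
    fmul (shiftP u) (shiftP v) = shiftP (fmul u (shiftP v)) + shiftP (fmul v (shiftP u)) := by
  have pz : ∀ w : ℕ → C, shiftP w 0 = 0 := fun w => rfl
  have ps : ∀ (w : ℕ → C) (k : ℕ), shiftP w (k + 1) = w k := fun w k => rfl
  funext j
  cases j with
  | zero => simp [fmul, shiftP]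
  | succ n =>
    show (∑ m ∈ Finset.range (n + 2), ((n+1).choose m : C) * shiftP u m * shiftP v (n + 1 - m))
      = (∑ m ∈ Finset.range (n + 1), (n.choose m : C) * u m * shiftP v (n - m))
      + (∑ m ∈ Finset.range (n + 1), (n.choose m : C) * v m * shiftP u (n - m))
    rw [Finset.sum_range_succ']
    have step : ∀ m ∈ Finset.range (n + 1),
        ((n+1).choose (m+1) : C) * shiftP u (m+1) * shiftP v (n + 1 - (m+1))
        = (n.choose m : C) * u m * shiftP v (n - m)
          + (n.choose (m+1) : C) * u m * shiftP v (n - m) := by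
      intro m _
      rw [ps, Nat.succ_sub_succ, Nat.choose_succ_succ]
      push_cast; ring
    rw [Finset.sum_congr rfl step, Finset.sum_add_distrib, pz]
    simp only [mul_zero, zero_mul, add_zero]
    congr 1
    rw [Finset.sum_range_succ, Finset.sum_range_succ]
    simp only [Nat.choose_succ_self, Nat.cast_zero, Nat.sub_self, pz, zero_mul, mul_zero,
      add_zero]
    have h1 : ∀ m ∈ Finset.range n,
        (n.choose (m+1) : C) * u m * shiftP v (n - m)
        = (n.choose (m+1) : C) * u m * v (n - 1 - m) := by
      intro m hm
      have : n - m = (n - 1 - m) + 1 := by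
        have := Finset.mem_range.mp hm; omega
      rw [this, ps]
    have h2 : ∀ m ∈ Finset.range n,
        (n.choose m : C) * v m * shiftP u (n - m)
        = (n.choose m : C) * v m * u (n - 1 - m) := by
      intro m hm
      have : n - m = (n - 1 - m) + 1 := by
        have := Finset.mem_range.mp hm; omega
      rw [this, ps]
    rw [Finset.sum_congr rfl h1, Finset.sum_congr rfl h2,
      ← Finset.sum_range_reflect (fun m => (n.choose m : C) * v m * u (n - 1 - m)) n]
    apply Finset.sum_congr rfl
    intro m hm
    have hm' : m < n := Finset.mem_range.mp hm
    have e1 : n - 1 - (n - 1 - m) = m := by omega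
    have e2 : n - 1 - m = n - (m + 1) := by omega
    have e3 : n.choose (n - 1 - m) = n.choose (m + 1) := by
      rw [e2]; exact Nat.choose_symm (by omega)
    rw [e1, e3]; ring
end

section
/- Let C be a commutative ring, λ ∈ C, and let a, b : ℕ → C be sequences in C. Then for every n ∈ ℕ, ∑_{k=0}^{n} λ^k ∑_{i=0}^{n} binom(n, i)·binom(i, k)·a(n+k−i)·b(i) = ∑_{k=0}^{n} λ^k ∑_{i=0}^{n} binom(n, i)·binom(i, k)·a(i)·b(n+k−i). Consequently, a sequence {p_n(x)} of power series is of λ-binomial type if and only if the symmetric identity p_n(x+y) = ∑_{k=0}^{n} λ^k ∑_{i=0}^{n} binom(n,i)·binom(i,k)·p_i(x)·p_{n+k−i}(y) holds. -/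
open Finset

/-
Fix `k`. Only the indices `k ≤ i ≤ n` contribute to the inner sum, and on them the reflection
`i ↦ n + k - i` swaps the arguments of `a` and `b` while preserving the weight
`binom(n,i)·binom(i,k) = n! / (k! (i-k)! (n-i)!)`, since it exchanges `i - k` and `n - i`.
So the two inner sums agree for every `k`, and the equivalence follows at once.
-/

theorem Nat.choose_mul_choose_reflect {n k i : ℕ} (hki : k ≤ i) (hin : i ≤ n) :
    n.choose i * i.choose k = n.choose (n + k - i) * (n + k - i).choose k := by
  rw [Nat.choose_mul hki, Nat.choose_mul (by omega : k ≤ n + k - i),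
    ← Nat.choose_symm (by omega : i - k ≤ n - k)]
  congr 2
  omega

theorem Finset.sum_range_choose_mul_eq_sum_Ico {R : Type*} [NonAssocSemiring R] (f : ℕ → R)
    (n k : ℕ) :
    ∑ i ∈ range (n + 1), (i.choose k : R) * f i = ∑ i ∈ Ico k (n + 1), (i.choose k : R) * f i := by
  refine (sum_subset (fun i hi ↦ ?_) fun i hi hi' ↦ ?_).symm
  · simp only [mem_Ico, mem_range] at hi ⊢
    exact hi.2
  · simp only [mem_Ico, mem_range, not_and, not_lt] at hi hi'
    rw [Nat.choose_eq_zero_of_lt (by omega), Nat.cast_zero, zero_mul]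

theorem sum_choose_mul_choose_mul_reflect {C : Type*} [CommRing C] (a b : ℕ → C) (n k : ℕ) :
    ∑ i ∈ range (n + 1), (n.choose i : C) * (i.choose k : C) * a (n + k - i) * b i
      = ∑ i ∈ range (n + 1), (n.choose i : C) * (i.choose k : C) * a i * b (n + k - i) := by
  set T : ℕ → C := fun j ↦ (j.choose k : C) * (n.choose j * a j * b (n + k - j))
  have hT : ∀ i ∈ Ico k (n + 1),
      (i.choose k : C) * (n.choose i * a (n + k - i) * b i) = T (n + k - i) := by
    intro i hi
    rw [mem_Ico] at hi
    simp only [T, Nat.sub_sub_self (by omega : i ≤ n + k), ← mul_assoc, ← Nat.cast_mul,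
      mul_comm (i.choose k), mul_comm ((n + k - i).choose k),
      Nat.choose_mul_choose_reflect hi.1 (by omega : i ≤ n)]
  calc ∑ i ∈ range (n + 1), (n.choose i : C) * (i.choose k : C) * a (n + k - i) * b i
      = ∑ i ∈ Ico k (n + 1), (i.choose k : C) * (n.choose i * a (n + k - i) * b i) := by
        rw [← sum_range_choose_mul_eq_sum_Ico]
        exact sum_congr rfl fun i _ ↦ by ring
    _ = ∑ i ∈ Ico k (n + 1), T (n + k - i) := sum_congr rfl hT
    _ = ∑ i ∈ Ico k (n + 1), T i := by
        rw [sum_Ico_reflect T k (by omega : n + 1 ≤ n + k + 1)]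
        rw [Nat.add_right_comm, Nat.add_sub_cancel, Nat.add_sub_cancel_left]
    _ = _ := by
        rw [← sum_range_choose_mul_eq_sum_Ico]
        exact sum_congr rfl fun i _ ↦ by ring

/-- The symmetry of the `λ`-binomial sum: for any sequences `a b : ℕ → C`,
`∑_{k=0}^{n} λ^k ∑_{i=0}^{n} binom(n,i)·binom(i,k)·a(n+k−i)·b(i)
  = ∑_{k=0}^{n} λ^k ∑_{i=0}^{n} binom(n,i)·binom(i,k)·a(i)·b(n+k−i)`.
Consequently (applying this with the values of a family of power series), a sequence
`{p_n}` is of `λ`-binomial type iff the symmetric identity holds. -/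
theorem lambda_binomial_symm {C : Type*} [CommRing C] (lam : C) (a b : ℕ → C) :
    (∀ n : ℕ,
      ∑ k ∈ Finset.range (n + 1), lam ^ k *
        ∑ i ∈ Finset.range (n + 1), (n.choose i : C) * (i.choose k : C) * a (n + k - i) * b i
      = ∑ k ∈ Finset.range (n + 1), lam ^ k *
        ∑ i ∈ Finset.range (n + 1), (n.choose i : C) * (i.choose k : C) * a i * b (n + k - i))
    ∧
    (∀ p : ℕ → C,
      (∀ n : ℕ, p n =
        ∑ k ∈ Finset.range (n + 1), lam ^ k *
          ∑ i ∈ Finset.range (n + 1), (n.choose i : C) * (i.choose k : C) * a (n + k - i) * b i)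
      ↔
      (∀ n : ℕ, p n =
        ∑ k ∈ Finset.range (n + 1), lam ^ k *
          ∑ i ∈ Finset.range (n + 1), (n.choose i : C) * (i.choose k : C) * a i * b (n + k - i))) := by
  have symm : ∀ n : ℕ,
      ∑ k ∈ Finset.range (n + 1), lam ^ k *
        ∑ i ∈ Finset.range (n + 1), (n.choose i : C) * (i.choose k : C) * a (n + k - i) * b i
      = ∑ k ∈ Finset.range (n + 1), lam ^ k *
        ∑ i ∈ Finset.range (n + 1), (n.choose i : C) * (i.choose k : C) * a i * b (n + k - i) :=
    fun n ↦ sum_congr rfl fun k _ ↦ by rw [sum_choose_mul_choose_mul_reflect]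
  exact ⟨symm, fun p ↦ forall_congr' fun n ↦ by rw [symm n]⟩
end

section
/- Let A be a commutative ℚ-algebra, let λ ∈ A, and for a ∈ A set τ_n(a) = (1/n!)·∏_{j=0}^{n−1}(a − j·λ). Then for all m, n ∈ ℕ, τ_m(a)·τ_n(a) = ∑_{k=0}^{m} binom(m+n−k, m)·binom(m, k)·λ^k·τ_{m+n−k}(a). (In particular, for a delta series f(t) in C[[t]] over a ℚ-algebra C, the sequence τ_n(f(t)) satisfies the λ-divided power multiplication rule.) -/
open Finset

/-- `τ_n(a) = (1/n!)·∏_{j=0}^{n−1}(a − j·λ)` in a commutative `ℚ`-algebra. -/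
def tau {A : Type*} [CommRing A] [Algebra ℚ A] (lam : A) (n : ℕ) (a : A) : A :=
  ((n.factorial : ℚ)⁻¹) • ∏ j ∈ Finset.range n, (a - (j : A) * lam)

/-! With `P_n = ∏_{j<n} (a - jλ)`, clearing factorials turns the rule into
`P_m P_n = ∑_k k! C(m,k) C(n,k) λ^k P_{m+n-k}`, a `λ`-deformation of the product formula for
falling factorials. It follows by induction on `n`: writing
`a - nλ = (a - (m+n-k)λ) + (m-k)λ` raises `P_{m+n-k}` to `P_{m+n+1-k}` and leaves a correction
term that Pascal's rule absorbs into the next coefficient. -/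

def mulCoeff (m n k : ℕ) : ℕ := k.factorial * m.choose k * n.choose k

lemma mulCoeff_zero_succ (m k : ℕ) : mulCoeff m 0 (k + 1) = 0 := by
  simp [mulCoeff]

lemma mulCoeff_zero_right (m n : ℕ) : mulCoeff m n 0 = 1 := by
  simp [mulCoeff]

lemma mulCoeff_succ_succ (m n k : ℕ) :
    mulCoeff m (n + 1) (k + 1) = mulCoeff m n k * (m - k) + mulCoeff m n (k + 1) := by
  have h := Nat.choose_succ_right_eq m k
  simp only [mulCoeff, Nat.choose_succ_succ, Nat.factorial_succ]
  linear_combination (k.factorial * n.choose k : ℕ) * h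

lemma sum_mulCoeff_succ {M : Type*} [AddCommMonoid M] (g : ℕ → M) (m n : ℕ) :
    ∑ k ∈ range (m + 1), (mulCoeff m n k • g k + (mulCoeff m n k * (m - k)) • g (k + 1)) =
      ∑ k ∈ range (m + 1), mulCoeff m (n + 1) k • g k := by
  rw [sum_add_distrib, sum_range_succ' (fun k => mulCoeff m n k • g k),
    sum_range_succ (fun k => (mulCoeff m n k * (m - k)) • g (k + 1)),
    sum_range_succ' (fun k => mulCoeff m (n + 1) k • g k)]
  simp only [mulCoeff_succ_succ, add_smul, sum_add_distrib, mulCoeff_zero_right, Nat.sub_self,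
    mul_zero, zero_smul, add_zero]
  abel

section FallingProd

variable {R : Type*} [CommRing R]

def fallingProd (lam a : R) (n : ℕ) : R := ∏ j ∈ range n, (a - j * lam)

lemma fallingProd_zero (lam a : R) : fallingProd lam a 0 = 1 := prod_range_zero _

lemma fallingProd_succ (lam a : R) (n : ℕ) :
    fallingProd lam a (n + 1) = fallingProd lam a n * (a - n * lam) :=
  prod_range_succ _ _

lemma fallingProd_mul_sub {lam a : R} {m k : ℕ} (hk : k ≤ m) (n : ℕ) :
    fallingProd lam a (m + n - k) * (a - n * lam) =
      fallingProd lam a (m + n + 1 - k) +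
        ((m - k : ℕ) : R) * lam * fallingProd lam a (m + n - k) := by
  obtain ⟨d, rfl⟩ := Nat.exists_eq_add_of_le hk
  rw [show k + d + n + 1 - k = d + n + 1 by omega, show k + d + n - k = d + n by omega,
    Nat.add_sub_cancel_left, fallingProd_succ]
  push_cast
  ring

theorem fallingProd_mul_fallingProd (lam a : R) (m n : ℕ) :
    fallingProd lam a m * fallingProd lam a n =
      ∑ k ∈ range (m + 1), mulCoeff m n k • (lam ^ k * fallingProd lam a (m + n - k)) := by
  induction n with
  | zero =>
    rw [sum_range_succ', fallingProd_zero]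
    simp [mulCoeff_zero_succ, mulCoeff_zero_right]
  | succ n ih =>
    rw [fallingProd_succ, ← mul_assoc, ih, sum_mul, ← sum_mulCoeff_succ]
    refine sum_congr rfl fun k hk => ?_
    rw [smul_mul_assoc, mul_assoc, fallingProd_mul_sub (mem_range_succ_iff.mp hk), ← add_assoc,
      show m + n + 1 - (k + 1) = m + n - k by omega]
    simp only [nsmul_eq_mul]
    push_cast
    ring

end FallingProd

lemma mulCoeff_div_factorial_mul_factorial {m k : ℕ} (hk : k ≤ m) (n : ℕ) :
    (mulCoeff m n k : ℚ) / (m.factorial * n.factorial) =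
      (m + n - k).choose m * m.choose k / (m + n - k).factorial := by
  rcases le_or_gt k n with hkn | hnk
  · rw [mulCoeff, Nat.cast_mul, Nat.cast_mul, Nat.cast_choose ℚ hk, Nat.cast_choose ℚ hkn,
      Nat.cast_choose ℚ (show m ≤ m + n - k by omega), show m + n - k - m = n - k by omega]
    field_simp
  · simp [mulCoeff, Nat.choose_eq_zero_of_lt hnk,
      Nat.choose_eq_zero_of_lt (show m + n - k < m by omega)]

/-- The `λ`-divided power multiplication rule:
`τ_m(a)·τ_n(a) = ∑_{k=0}^{m} binom(m+n−k,m)·binom(m,k)·λ^k·τ_{m+n−k}(a)`. -/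
theorem tau_mul_tau {A : Type*} [CommRing A] [Algebra ℚ A] (lam : A) (a : A) (m n : ℕ) :
    tau lam m a * tau lam n a =
      ∑ k ∈ Finset.range (m + 1),
        ((m + n - k).choose m : A) * (m.choose k : A) * lam ^ k * tau lam (m + n - k) a := by
  have tau_eq (i : ℕ) :
      tau lam i a = algebraMap ℚ A (i.factorial : ℚ)⁻¹ * fallingProd lam a i :=
    Algebra.smul_def _ _
  simp only [tau_eq]
  rw [mul_mul_mul_comm, fallingProd_mul_fallingProd, mul_sum]
  refine sum_congr rfl fun k hk => ?_
  have hcoeff := congrArg (algebraMap ℚ A)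
    (mulCoeff_div_factorial_mul_factorial (mem_range_succ_iff.mp hk) n)
  simp only [div_eq_mul_inv, mul_inv, map_mul, map_natCast] at hcoeff
  rw [nsmul_eq_mul]
  linear_combination (lam ^ k * fallingProd lam a (m + n - k)) * hcoeff
end

section
/- Let C be a commutative ℚ-algebra and λ ∈ C, and let e_λ(x) = ∑_{k=1}^{∞} λ^{k−1}·x^k/k! ∈ C[[x]]. Then for every n ∈ ℕ, in C[[x,y]]: e_λ(x+y)^n = ∑_{k=0}^{n} λ^k ∑_{i=0}^{n} binom(n, i)·binom(i, k)·e_λ(x)^{n+k−i}·e_λ(y)^{i}. That is, {e_λ(x)^n}_{n∈ℕ} is a sequence of λ-binomial type. -/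
/-!
Since `1 + λ e_λ(x) = exp(λx)`, the series `e_λ` satisfies the functional equation
`e_λ(x + y) = e_λ(x) + e_λ(y) + λ e_λ(x) e_λ(y)`; on the coefficient of `x^a y^b` with
`a, b ≥ 1` it reads `binom(a+b, a)/(a+b)! = 1/(a! b!)`. Writing `u + v + λuv = (1 + λu) v + u`
and applying the binomial theorem twice gives the `λ`-binomial expansion of `(u + v + λuv)^n`
in any commutative ring.
-/

open Finset PowerSeries

/-- `e_λ(x) = ∑_{k=1}^{∞} λ^{k−1}·x^k/k! ∈ C[[x]]`. -/
noncomputable def elam {C : Type*} [CommRing C] [Algebra ℚ C] (lam : C) : PowerSeries C :=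
  PowerSeries.mk fun k => if k = 0 then 0 else ((k.factorial : ℚ)⁻¹) • lam ^ (k - 1)

/-- Substitution of a two-variable power series `g` (with zero constant term) into a
one-variable power series `f`, i.e. `f(g) = ∑_k (coeff k f)·g^k`, defined coefficientwise:
the coefficient of the monomial `d` only receives contributions from `k ≤ |d|`. -/
noncomputable def substInto {C : Type*} [CommRing C] (g : MvPowerSeries (Fin 2) C)
    (f : PowerSeries C) : MvPowerSeries (Fin 2) C :=
  fun d => ∑ k ∈ Finset.range (d.sum (fun _ e => e) + 1),
    PowerSeries.coeff k f * MvPowerSeries.coeff d (g ^ k)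

theorem add_add_mul_mul_pow {R : Type*} [CommRing R] (l u v : R) (n : ℕ) :
    (u + v + l * (u * v)) ^ n =
      ∑ k ∈ range (n + 1), l ^ k *
        ∑ i ∈ range (n + 1),
          (n.choose i : R) * (i.choose k : R) * (u ^ (n + k - i) * v ^ i) := by
  have expand_one_add (i : ℕ) (hi : i ≤ n) :
      (1 + l * u) ^ i = ∑ k ∈ range (n + 1), (l * u) ^ k * (i.choose k : R) := by
    rw [add_comm, add_pow]
    simp only [one_pow, mul_one]
    refine sum_subset (range_subset_range.mpr (by omega)) fun k _ hk => ?_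
    rw [Nat.choose_eq_zero_of_lt (by simpa using hk), Nat.cast_zero, mul_zero]
  calc (u + v + l * (u * v)) ^ n
      = ∑ i ∈ range (n + 1), (n.choose i : R) * (1 + l * u) ^ i * v ^ i * u ^ (n - i) := by
        rw [show u + v + l * (u * v) = (1 + l * u) * v + u by ring, add_pow]
        exact sum_congr rfl fun i _ => by rw [mul_pow]; ring
    _ = ∑ i ∈ range (n + 1), ∑ k ∈ range (n + 1),
          l ^ k * ((n.choose i : R) * (i.choose k : R) * (u ^ (n + k - i) * v ^ i)) := by
        refine sum_congr rfl fun i hi => ?_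
        have hi : i ≤ n := Nat.lt_succ_iff.mp (mem_range.mp hi)
        rw [expand_one_add i hi, mul_sum, sum_mul, sum_mul]
        refine sum_congr rfl fun k _ => ?_
        rw [show n + k - i = k + (n - i) by omega]
        ring
    _ = _ := by
        rw [sum_comm]
        simp only [mul_sum]

theorem Finsupp.degree_fin_two (d : Fin 2 →₀ ℕ) : d.degree = d 0 + d 1 := by
  rw [degree_eq_sum, Fin.sum_univ_two]

theorem Finsupp.eq_single_zero_add_single_one_iff (d : Fin 2 →₀ ℕ) (a b : ℕ) :
    d = single 0 a + single 1 b ↔ d 0 = a ∧ d 1 = b := by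
  simp [Finsupp.ext_iff, Fin.forall_fin_two]

section Substitution

variable {C : Type*} [CommRing C]

theorem coeff_substInto (g : MvPowerSeries (Fin 2) C) (f : PowerSeries C) (d : Fin 2 →₀ ℕ) :
    MvPowerSeries.coeff d (substInto g f) =
      ∑ k ∈ range (d.degree + 1), coeff k f * MvPowerSeries.coeff d (g ^ k) :=
  rfl

theorem coeff_substInto_of_coeff_pow_eq_zero {g : MvPowerSeries (Fin 2) C}
    (hg : ∀ k d, d.degree ≠ k → MvPowerSeries.coeff d (g ^ k) = 0) (f : PowerSeries C)
    (d : Fin 2 →₀ ℕ) :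
    MvPowerSeries.coeff d (substInto g f) =
      coeff d.degree f * MvPowerSeries.coeff d (g ^ d.degree) := by
  rw [coeff_substInto]
  exact sum_eq_single_of_mem _ (self_mem_range_succ _) fun k _ hk => by
    rw [hg k d (Ne.symm hk), mul_zero]

theorem coeff_substInto_X {s t : Fin 2} (hst : s ≠ t) (f : PowerSeries C) (d : Fin 2 →₀ ℕ) :
    MvPowerSeries.coeff d (substInto (MvPowerSeries.X s) f) =
      if d t = 0 then coeff (d s) f else 0 := by
  have hdeg : d.degree = d s + d t := by
    fin_cases s <;> fin_cases t <;> simp_all [Finsupp.degree_fin_two, add_comm]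
  have hsingle : d = Finsupp.single s (d s + d t) ↔ d t = 0 := by
    fin_cases s <;> fin_cases t <;> simp_all [Finsupp.ext_iff, Fin.forall_fin_two]
  have hg (k : ℕ) (e : Fin 2 →₀ ℕ) (hk : e.degree ≠ k) :
      MvPowerSeries.coeff e ((MvPowerSeries.X s : MvPowerSeries (Fin 2) C) ^ k) = 0 := by
    rw [MvPowerSeries.coeff_X_pow, if_neg]
    rintro rfl
    simp at hk
  rw [coeff_substInto_of_coeff_pow_eq_zero hg, MvPowerSeries.coeff_X_pow, hdeg]
  simp only [hsingle]
  split_ifs with h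
  · rw [h, add_zero, mul_one]
  · rw [mul_zero]

theorem coeff_X_zero_add_X_one_pow (k : ℕ) (d : Fin 2 →₀ ℕ) :
    MvPowerSeries.coeff d ((MvPowerSeries.X 0 + MvPowerSeries.X 1 : MvPowerSeries (Fin 2) C) ^ k) =
      if d.degree = k then (k.choose (d 0) : C) else 0 := by
  have hmonomial (j : ℕ) (hj : j ∈ range (k + 1)) :
      d = Finsupp.single 0 j + Finsupp.single 1 (k - j) ↔ d 0 = j ∧ d.degree = k := by
    rw [mem_range] at hj
    rw [Finsupp.eq_single_zero_add_single_one_iff, Finsupp.degree_fin_two]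
    omega
  simp only [add_pow, map_sum, MvPowerSeries.X_pow_eq, MvPowerSeries.monomial_mul_monomial,
    one_mul, ← map_natCast (MvPowerSeries.C (σ := Fin 2) (R := C)), MvPowerSeries.coeff_mul_C,
    MvPowerSeries.coeff_monomial, ite_mul, zero_mul]
  rw [sum_congr rfl fun j hj => if_congr (hmonomial j hj) rfl rfl]
  split_ifs with hk
  · simp only [hk, and_true]
    rw [sum_ite_eq, if_pos (mem_range.mpr (by rw [← hk, Finsupp.degree_fin_two]; omega))]
  · simp [hk]

theorem coeff_substInto_X_zero_add_X_one (f : PowerSeries C) (d : Fin 2 →₀ ℕ) :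
    MvPowerSeries.coeff d (substInto (MvPowerSeries.X 0 + MvPowerSeries.X 1) f) =
      ((d 0 + d 1).choose (d 0) : C) * coeff (d 0 + d 1) f := by
  rw [coeff_substInto_of_coeff_pow_eq_zero, coeff_X_zero_add_X_one_pow, if_pos rfl,
    Finsupp.degree_fin_two, mul_comm]
  intro k e hk
  rw [coeff_X_zero_add_X_one_pow, if_neg hk]

theorem coeff_substInto_X_zero_mul_substInto_X_one (f g : PowerSeries C) (d : Fin 2 →₀ ℕ) :
    MvPowerSeries.coeff d (substInto (MvPowerSeries.X 0) f * substInto (MvPowerSeries.X 1) g) =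
      coeff (d 0) f * coeff (d 1) g := by
  have hd : Finsupp.single 0 (d 0) + Finsupp.single 1 (d 1) = d :=
    ((Finsupp.eq_single_zero_add_single_one_iff d _ _).mpr ⟨rfl, rfl⟩).symm
  rw [MvPowerSeries.coeff_mul, sum_eq_single_of_mem (Finsupp.single 0 (d 0), Finsupp.single 1 (d 1))
    (HasAntidiagonal.mem_antidiagonal.mpr hd)]
  · rw [coeff_substInto_X zero_ne_one, coeff_substInto_X one_ne_zero]
    simp
  rintro ⟨p, q⟩ hpq hne
  rw [HasAntidiagonal.mem_antidiagonal, Finsupp.ext_iff, Fin.forall_fin_two] at hpq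
  rw [coeff_substInto_X zero_ne_one, coeff_substInto_X one_ne_zero]
  split_ifs with hp hq
  · refine absurd ?_ hne
    simp_all [Finsupp.ext_iff, Fin.forall_fin_two]
  all_goals simp

end Substitution

section Elam

variable {C : Type*} [CommRing C] [Algebra ℚ C] (lam : C)

@[simp]
theorem coeff_zero_elam : coeff 0 (elam lam) = 0 := by
  simp [elam]

theorem coeff_succ_elam (k : ℕ) :
    coeff (k + 1) (elam lam) = ((k + 1).factorial : ℚ)⁻¹ • lam ^ k := by
  simp [elam]

theorem add_choose_mul_coeff_elam_add {a b : ℕ} (ha : a ≠ 0) (hb : b ≠ 0) :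
    ((a + b).choose a : C) * coeff (a + b) (elam lam) =
      lam * (coeff a (elam lam) * coeff b (elam lam)) := by
  have hfactorial : ((a + b).choose a : ℚ) * ((a + b).factorial : ℚ)⁻¹ =
      (a.factorial : ℚ)⁻¹ * (b.factorial : ℚ)⁻¹ := by
    rw [Nat.cast_add_choose]
    field_simp
  obtain ⟨a, rfl⟩ := Nat.exists_eq_add_one_of_ne_zero ha
  obtain ⟨b, rfl⟩ := Nat.exists_eq_add_one_of_ne_zero hb
  rw [show a + 1 + (b + 1) = a + b + 1 + 1 by ring] at hfactorial ⊢
  simp only [coeff_succ_elam, Algebra.smul_def, ← map_natCast (algebraMap ℚ C)]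
  rw [← mul_assoc, ← map_mul, hfactorial, map_mul]
  ring

theorem substInto_X_zero_add_X_one_elam :
    substInto (MvPowerSeries.X 0 + MvPowerSeries.X 1) (elam lam) =
      substInto (MvPowerSeries.X 0) (elam lam) + substInto (MvPowerSeries.X 1) (elam lam) +
        lam • (substInto (MvPowerSeries.X 0) (elam lam) *
          substInto (MvPowerSeries.X 1) (elam lam)) := by
  ext d
  rw [map_add, map_add, MvPowerSeries.coeff_smul, coeff_substInto_X_zero_add_X_one,
    coeff_substInto_X_zero_mul_substInto_X_one, coeff_substInto_X zero_ne_one,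
    coeff_substInto_X one_ne_zero]
  rcases eq_or_ne (d 0) 0 with ha | ha
  · simp [ha]
  rcases eq_or_ne (d 1) 0 with hb | hb
  · simp [hb]
  rw [if_neg ha, if_neg hb, zero_add, zero_add]
  exact add_choose_mul_coeff_elam_add lam ha hb

end Elam

/-- `{e_λ(x)^n}` is a sequence of `λ`-binomial type: in `C[[x,y]]`,
`e_λ(x+y)^n = ∑_{k=0}^{n} λ^k ∑_{i=0}^{n} binom(n,i)·binom(i,k)·e_λ(x)^{n+k−i}·e_λ(y)^{i}`. -/
theorem elam_pow_lambda_binomial {C : Type*} [CommRing C] [Algebra ℚ C] (lam : C) (n : ℕ) :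
    (substInto (MvPowerSeries.X 0 + MvPowerSeries.X 1) (elam lam)) ^ n =
      ∑ k ∈ Finset.range (n + 1), lam ^ k •
        ∑ i ∈ Finset.range (n + 1), ((n.choose i : C) * (i.choose k : C)) •
          ((substInto (MvPowerSeries.X 0) (elam lam)) ^ (n + k - i) *
            (substInto (MvPowerSeries.X 1) (elam lam)) ^ i) := by
  rw [substInto_X_zero_add_X_one_elam, Algebra.smul_def, add_add_mul_mul_pow]
  simp only [Algebra.smul_def, map_mul, map_pow, map_natCast, mul_sum]
end

section
/- For all natural numbers n, k, i, w with k ≤ n and i ≤ n, the following binomial coefficient identity holds: ∑_{s=0}^{w} binom(k, s)·binom(n−k+s, i)·binom(i, w−s) = ∑_{s=0}^{min(w, i)} binom(k, w−s)·binom(n+s−i, s)·binom(n−k, i−s). -/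
/-!
Both sides equal `∑_t C(k,t) C(n-k, i-t) C(k-t+i, w-t)`. On the left, expand `C(n-k+s, i)` by
Vandermonde over `t` and sum over `s` first: trinomial revision
`C(k,s) C(s,t) = C(k,t) C(k-t, s-t)` and Vandermonde again give `C(k,t) C(k-t+i, w-t)`.
On the right, expand `C(n+s-i, s) = C(k + (n-k-(i-s)), s)` by Vandermonde over `u`, absorb
`C(n-k, i-s)` by trinomial revision into `C(n-k, i-u) C(i-u, s-u)`, exchange the triangular
double sum, and sum over `s` by Vandermonde.
-/

open Finset

theorem Finset.sum_range_eq_sum_range_of_eq_zero {M : Type*} [AddCommMonoid M] {f : ℕ → M}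
    {a b : ℕ} (hab : a ≤ b) (hf : ∀ j, a ≤ j → j < b → f j = 0) :
    ∑ j ∈ range a, f j = ∑ j ∈ range b, f j :=
  sum_subset (range_subset_range.2 hab) fun j hjb hja =>
    hf j (by simpa using hja) (mem_range.1 hjb)

namespace Nat

theorem add_choose_eq_sum_range (a b c : ℕ) :
    (a + b).choose c = ∑ j ∈ range (c + 1), a.choose j * b.choose (c - j) := by
  rw [add_choose_eq, Finset.Nat.sum_antidiagonal_eq_sum_range_succ_mk]

theorem add_choose_eq_sum_range_min (a b c : ℕ) :
    (a + b).choose c = ∑ j ∈ range (min a c + 1), a.choose j * b.choose (c - j) := by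
  rw [add_choose_eq_sum_range]
  refine (sum_range_eq_sum_range_of_eq_zero (by omega) fun j hj _ => ?_).symm
  rw [choose_eq_zero_of_lt (by omega : a < j), Nat.zero_mul]

theorem sum_choose_mul_choose_mul_choose_sub {k t w : ℕ} (i : ℕ) (htw : t ≤ w) :
    ∑ s ∈ range (w + 1), k.choose s * s.choose t * i.choose (w - s) =
      k.choose t * (k - t + i).choose (w - t) := by
  obtain ⟨d, rfl⟩ := Nat.exists_eq_add_of_le htw
  have hlow : ∑ s ∈ range t, k.choose s * s.choose t * i.choose (t + d - s) = 0 :=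
    sum_eq_zero fun s hs => by
      rw [choose_eq_zero_of_lt (mem_range.1 hs), Nat.mul_zero, Nat.zero_mul]
  rw [show t + d + 1 = t + (d + 1) by omega, sum_range_add, hlow, Nat.zero_add,
    add_tsub_cancel_left, add_choose_eq_sum_range, mul_sum]
  refine sum_congr rfl fun j _ => ?_
  rw [choose_mul (Nat.le_add_right t j), add_tsub_cancel_left,
    show t + d - (t + j) = d - j by omega, Nat.mul_assoc]

theorem add_sub_choose_mul_choose_eq_sum (k m p s : ℕ) :
    (m + k - p).choose s * m.choose p =
      ∑ u ∈ range (s + 1), k.choose u * (m.choose (p + (s - u)) * (p + (s - u)).choose p) := by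
  rcases le_or_gt p m with hpm | hmp
  · rw [show m + k - p = k + (m - p) by omega, add_choose_eq_sum_range, sum_mul]
    refine sum_congr rfl fun u _ => ?_
    rw [choose_mul (Nat.le_add_right p _), add_tsub_cancel_left]
    ring
  · rw [choose_eq_zero_of_lt hmp, Nat.mul_zero]
    refine (sum_eq_zero fun u _ => ?_).symm
    rw [choose_eq_zero_of_lt (by omega : m < p + (s - u)), Nat.zero_mul, Nat.mul_zero]

end Nat

open Nat

def middleSum (m k i w : ℕ) : ℕ :=
  ∑ t ∈ range (min w i + 1), k.choose t * m.choose (i - t) * (k - t + i).choose (w - t)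

theorem sum_choose_mul_add_choose_mul_choose_eq_middleSum (m k i w : ℕ) :
    ∑ s ∈ range (w + 1), k.choose s * (m + s).choose i * i.choose (w - s) =
      middleSum m k i w := by
  have hexpand : ∀ s, k.choose s * (m + s).choose i * i.choose (w - s) =
      ∑ t ∈ range (i + 1), m.choose (i - t) * (k.choose s * s.choose t * i.choose (w - s)) := by
    intro s
    rw [Nat.add_comm m s, add_choose_eq_sum_range, mul_sum, sum_mul]
    exact sum_congr rfl fun t _ => by ring
  have hvanish : ∀ t, w < t →
      ∑ s ∈ range (w + 1), k.choose s * s.choose t * i.choose (w - s) = 0 := fun t hwt =>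
    sum_eq_zero fun s hs => by
      rw [choose_eq_zero_of_lt (by simp only [mem_range] at hs; omega : s < t), Nat.mul_zero,
        Nat.zero_mul]
  simp only [hexpand]
  rw [sum_comm, middleSum]
  simp only [← mul_sum]
  rw [← sum_range_eq_sum_range_of_eq_zero (by omega : min w i + 1 ≤ i + 1)
    fun t ht _ => by rw [hvanish t (by omega), Nat.mul_zero]]
  refine sum_congr rfl fun t ht => ?_
  rw [sum_choose_mul_choose_mul_choose_sub i (by simp only [mem_range] at ht; omega)]
  ring

theorem sum_choose_sub_mul_choose_mul_choose_eq_middleSum (m k i w : ℕ) :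
    ∑ s ∈ range (min w i + 1),
        k.choose (w - s) * (m + k - (i - s)).choose s * m.choose (i - s) = middleSum m k i w := by
  have hexpand : ∀ s ∈ range (min w i + 1),
      k.choose (w - s) * (m + k - (i - s)).choose s * m.choose (i - s) =
        ∑ u ∈ range (s + 1), k.choose u * m.choose (i - u) *
          ((i - u).choose (s - u) * k.choose (w - u - (s - u))) := by
    intro s hs
    rw [Nat.mul_assoc, add_sub_choose_mul_choose_eq_sum, mul_sum]
    refine sum_congr rfl fun u hu => ?_
    simp only [mem_range] at hs hu
    rw [show i - s + (s - u) = i - u by omega, show w - u - (s - u) = w - s by omega,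
      choose_symm_of_eq_add (show i - u = i - s + (s - u) by omega)]
    ring
  rw [sum_congr rfl hexpand, sum_range_diag_flip (min w i + 1) fun u j =>
    k.choose u * m.choose (i - u) * ((i - u).choose j * k.choose (w - u - j)), middleSum]
  refine sum_congr rfl fun u hu => ?_
  simp only [mem_range] at hu
  rw [← mul_sum, show min w i + 1 - u = min (i - u) (w - u) + 1 by omega,
    ← add_choose_eq_sum_range_min]
  rcases le_or_gt u k with huk | hku
  · rw [show i - u + k = k - u + i by omega]
  · simp only [choose_eq_zero_of_lt hku, Nat.zero_mul]

/-- The binomial coefficient identity needed for shift-invariance in the `λ`-umbral calculus: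
`∑_{s=0}^{w} binom(k,s)·binom(n−k+s,i)·binom(i,w−s)
  = ∑_{s=0}^{min(w,i)} binom(k,w−s)·binom(n+s−i,s)·binom(n−k,i−s)`. -/
theorem choose_shift_identity (n k i w : ℕ) (hk : k ≤ n) (hi : i ≤ n) :
    ∑ s ∈ Finset.range (w + 1), k.choose s * (n - k + s).choose i * i.choose (w - s) =
      ∑ s ∈ Finset.range (min w i + 1),
        k.choose (w - s) * (n + s - i).choose s * (n - k).choose (i - s) := by
  have hshift : ∀ s ∈ range (min w i + 1), n + s - i = n - k + k - (i - s) := fun s hs => by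
    simp only [mem_range] at hs
    omega
  rw [sum_choose_mul_add_choose_mul_choose_eq_middleSum, sum_congr rfl fun s hs => by
    rw [hshift s hs], sum_choose_sub_mul_choose_mul_choose_eq_middleSum]
end

section
/- Let A be a commutative ℚ-algebra, let λ ∈ A, and let f : ℕ → A be a sequence with f(0) = 1 such that for all m, n ∈ ℕ, f(m)·f(n) = ∑_{k=0}^{m} binom(m+n−k, m)·binom(m, k)·λ^k·f(m+n−k). Then for every n ∈ ℕ, f(n) = (1/n!)·∏_{j=0}^{n−1}(f(1) − j·λ). In particular, f(n+1) = f(n)·(f(1) − n·λ)/(n+1) for all n, so every λ-divided power pseudo-basis of C[[t]] is of the form {τ_n(f_1)} for its degree-one member f_1. -/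
open Finset

/-- Any `λ`-divided power sequence `f` in a commutative `ℚ`-algebra with `f(0) = 1` is
determined by its degree-one member: `f(n) = (1/n!)·∏_{j=0}^{n−1}(f(1) − j·λ)`. -/
theorem lambda_divided_power_eq_tau {A : Type*} [CommRing A] [Algebra ℚ A] (lam : A)
    (f : ℕ → A) (h0 : f 0 = 1)
    (hmul : ∀ m n : ℕ, f m * f n =
      ∑ k ∈ Finset.range (m + 1),
        ((m + n - k).choose m : A) * (m.choose k : A) * lam ^ k * f (m + n - k)) :
    ∀ n : ℕ, f n = ((n.factorial : ℚ)⁻¹) • ∏ j ∈ Finset.range n, (f 1 - (j : A) * lam) := by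
  intro n
  induction n with
  | zero => simp [h0]
  | succ n ih =>
    have key := hmul 1 n
    rw [Finset.sum_range_succ, Finset.sum_range_one] at key
    simp only [Nat.choose_one_right, Nat.choose_self, Nat.choose_zero_right, pow_zero,
      pow_one, Nat.cast_one, one_mul, mul_one] at key
    have h1n : 1 + n - 0 = n + 1 := by omega
    have h2n : 1 + n - 1 = n := by omega
    rw [h1n, h2n] at key
    have hstep : ((n : A) + 1) * f (n + 1) = (f 1 - (n : A) * lam) * f n := by
      push_cast at key ⊢
      linear_combination -key
    have hsmul : ((n : ℚ) + 1) • f (n + 1) = ((n : A) + 1) * f (n + 1) := by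
      rw [Algebra.smul_def]
      norm_num
    have hne : ((n : ℚ) + 1) ≠ 0 := by positivity
    have hinv : f (n + 1) = ((n : ℚ) + 1)⁻¹ • ((f 1 - (n : A) * lam) * f n) := by
      rw [← hstep, ← hsmul, smul_smul, inv_mul_cancel₀ hne, one_smul]
    rw [hinv, ih, Finset.prod_range_succ, Nat.factorial_succ, mul_smul_comm, smul_smul]
    rw [mul_comm (∏ j ∈ Finset.range n, (f 1 - (j : A) * lam)) (f 1 - (n : A) * lam)]
    congr 1
    push_cast [mul_inv]
    ring
end
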